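/- Let T be a finite tree and let e₁, …, e_k (k ≥ 1) be pairwise distinct edges of T. For each i let A_i and B_i denote the two connected components of T − e_i, and suppose that for all i ≠ j both endpoints of e_j lie in A_i. Then: (a) there is a vertex of T that lies in every A_i; (b) the vertex sets of B₁, …, B_k are pairwise disjoint; and (c) every edge of T is exactly one of the following: one of the edges e₁, …, e_k, an edge of exactly one of the subtrees B_i, or an edge both of whose endpoints lie in the intersection of the vertex sets of all the A_i. -/

import Mathlib

/-!
Deleting `eᵢ = aᵢbᵢ` splits the tree into `Aᵢ ∋ aᵢ` and `Bᵢ ∋ bᵢ`. For `i ≠ j` the edge `eⱼ`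
lies in `Aᵢ` and `eᵢ` lies in `Aⱼ`; a walk inside `Bᵢ` starting at `bᵢ` can never cross `eⱼ`,
since it would then reach `aⱼ ∈ Aᵢ` without crossing `eᵢ`. Hence `Bᵢ ⊆ Aⱼ`, so the `Bᵢ` are
pairwise disjoint. An edge other than the `eᵢ` has both ends on the same side of every `eᵢ`,
which gives the classification of the edges.
-/

/-- The connected component of `u` in the graph `T` with the edge `s(u, v)` deleted.
For a tree `T` and an edge `uv`, `edgeSide T u v` and `edgeSide T v u` are the two
connected components of `T − uv`. -/
def edgeSide {V : Type*} (T : SimpleGraph V) (u v : V) : Set V :=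
  {w | (T.deleteEdges {s(u, v)}).Reachable u w}

open SimpleGraph

section OneEdge

variable {V : Type*} {T : SimpleGraph V} {u v x y w : V}

lemma mem_edgeSide_swap_iff :
    w ∈ edgeSide T v u ↔ (T.deleteEdges {s(u, v)}).Reachable v w := by
  rw [edgeSide, Sym2.eq_swap]; rfl

lemma mem_edgeSide_self : u ∈ edgeSide T u v := Reachable.refl u

lemma mem_edgeSide_of_adj (hxy : T.Adj x y) (he : s(x, y) ≠ s(u, v))
    (hx : x ∈ edgeSide T u v) : y ∈ edgeSide T u v :=
  hx.trans (by simp [he, hxy] : (T.deleteEdges {s(u, v)}).Adj x y).reachable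

lemma disjoint_edgeSide (hT : T.IsAcyclic) (huv : T.Adj u v) :
    Disjoint (edgeSide T u v) (edgeSide T v u) :=
  Set.disjoint_left.mpr fun _ hu hv =>
    isBridge_iff.mp (isAcyclic_iff_forall_adj_isBridge.mp hT huv)
      (hu.trans (mem_edgeSide_swap_iff.mp hv).symm)

lemma snd_notMem_edgeSide (hT : T.IsAcyclic) (huv : T.Adj u v) : v ∉ edgeSide T u v :=
  fun hv => (disjoint_edgeSide hT huv).notMem_of_mem_right mem_edgeSide_self hv

lemma edgeSide_union_edgeSide (hT : T.Connected) (u v : V) :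
    edgeSide T u v ∪ edgeSide T v u = Set.univ := by
  have closed : ∀ {z w : V} (p : T.Walk z w),
      z ∈ edgeSide T u v ∪ edgeSide T v u → w ∈ edgeSide T u v ∪ edgeSide T v u := by
    intro z w p
    induction p with
    | nil => exact id
    | @cons z x _ hzx _ ih =>
      refine fun hz => ih ?_
      by_cases he : s(z, x) = s(u, v)
      · rcases Sym2.eq_iff.mp he with ⟨rfl, rfl⟩ | ⟨rfl, rfl⟩
        · exact Or.inr mem_edgeSide_self
        · exact Or.inl mem_edgeSide_self
      · have he' : s(z, x) ≠ s(v, u) := fun h => he (h.trans Sym2.eq_swap)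
        exact hz.imp (mem_edgeSide_of_adj hzx he) (mem_edgeSide_of_adj hzx he')
  exact Set.eq_univ_of_forall fun w => closed (hT u w).some (Or.inl mem_edgeSide_self)

lemma mem_edgeSide_and_or_of_adj (hT : T.Connected) (hxy : T.Adj x y)
    (he : s(x, y) ≠ s(u, v)) :
    (x ∈ edgeSide T u v ∧ y ∈ edgeSide T u v) ∨
      (x ∈ edgeSide T v u ∧ y ∈ edgeSide T v u) := by
  have he' : s(x, y) ≠ s(v, u) := fun h => he (h.trans Sym2.eq_swap)
  rcases (Set.ext_iff.mp (edgeSide_union_edgeSide hT u v) x).mpr trivial with hx | hx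
  · exact Or.inl ⟨hx, mem_edgeSide_of_adj hxy he hx⟩
  · exact Or.inr ⟨hx, mem_edgeSide_of_adj hxy he' hx⟩

lemma edgeSide_subset_edgeSide (hT : T.IsAcyclic) (huv : T.Adj u v)
    (hx : x ∈ edgeSide T u v) (hv : v ∈ edgeSide T x y) :
    edgeSide T v u ⊆ edgeSide T x y := by
  classical
  intro w hw
  obtain ⟨p, hp⟩ := reachable_deleteEdges_iff_exists_walk.mp (mem_edgeSide_swap_iff.mp hw)
  by_cases hxy : s(x, y) ∈ p.edges
  · have hxp := p.fst_mem_support_of_mem_edges hxy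
    have hx' : x ∈ edgeSide T v u := mem_edgeSide_swap_iff.mpr <|
      reachable_deleteEdges_iff_exists_walk.mpr
        ⟨p.takeUntil x hxp, fun h => hp (p.edges_takeUntil_subset_edges hxp h)⟩
    exact absurd hx' ((disjoint_edgeSide hT huv).notMem_of_mem_left hx)
  · exact hv.trans (reachable_deleteEdges_iff_exists_walk.mpr ⟨p, hxy⟩)

end OneEdge

section EdgeFamily

variable {V ι : Type*} {T : SimpleGraph V} {a b : ι → V}

def OnFstSides (T : SimpleGraph V) (a b : ι → V) : Prop :=
  ∀ i j, i ≠ j → a j ∈ edgeSide T (a i) (b i) ∧ b j ∈ edgeSide T (a i) (b i)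

lemma fst_mem_iInter_edgeSide (hA : OnFstSides T a b) (i₀ : ι) :
    a i₀ ∈ ⋂ i, edgeSide T (a i) (b i) :=
  Set.mem_iInter.mpr fun i => by
    by_cases hi : i = i₀
    · exact hi ▸ mem_edgeSide_self
    · exact (hA i i₀ hi).1

lemma edgeSide_swap_subset_edgeSide (hadj : ∀ i, T.Adj (a i) (b i)) (hA : OnFstSides T a b)
    (hT : T.IsAcyclic) {i j : ι} (hij : i ≠ j) :
    edgeSide T (b i) (a i) ⊆ edgeSide T (a j) (b j) :=
  edgeSide_subset_edgeSide hT (hadj i) (hA i j hij).1 (hA j i hij.symm).2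

lemma disjoint_edgeSide_swap (hadj : ∀ i, T.Adj (a i) (b i)) (hA : OnFstSides T a b)
    (hT : T.IsAcyclic) {i j : ι} (hij : i ≠ j) :
    Disjoint (edgeSide T (b i) (a i)) (edgeSide T (b j) (a j)) :=
  (disjoint_edgeSide hT (hadj j)).mono_left (edgeSide_swap_subset_edgeSide hadj hA hT hij)

lemma fst_notMem_edgeSide_swap (hadj : ∀ i, T.Adj (a i) (b i)) (hA : OnFstSides T a b)
    (hT : T.IsAcyclic) (i j : ι) : a i ∉ edgeSide T (b j) (a j) :=
  (disjoint_edgeSide hT (hadj j)).notMem_of_mem_left <| by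
    by_cases hij : i = j
    · exact hij ▸ mem_edgeSide_self
    · exact (hA j i (Ne.symm hij)).1

lemma adj_trichotomy (hadj : ∀ i, T.Adj (a i) (b i)) (hA : OnFstSides T a b)
    (hT : T.IsTree) {x y : V} (hxy : T.Adj x y) :
    ((∃ i, s(x, y) = s(a i, b i)) ∧
        ¬ (∃ i, x ∈ edgeSide T (b i) (a i) ∧ y ∈ edgeSide T (b i) (a i)) ∧
        ¬ ((x ∈ ⋂ i, edgeSide T (a i) (b i)) ∧ (y ∈ ⋂ i, edgeSide T (a i) (b i)))) ∨
      ((∃! i, x ∈ edgeSide T (b i) (a i) ∧ y ∈ edgeSide T (b i) (a i)) ∧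
        ¬ (∃ i, s(x, y) = s(a i, b i)) ∧
        ¬ ((x ∈ ⋂ i, edgeSide T (a i) (b i)) ∧ (y ∈ ⋂ i, edgeSide T (a i) (b i)))) ∨
      (((x ∈ ⋂ i, edgeSide T (a i) (b i)) ∧ (y ∈ ⋂ i, edgeSide T (a i) (b i))) ∧
        ¬ (∃ i, s(x, y) = s(a i, b i)) ∧
        ¬ (∃ i, x ∈ edgeSide T (b i) (a i) ∧ y ∈ edgeSide T (b i) (a i))) := by
  have isEdge_not_inB : (∃ i, s(x, y) = s(a i, b i)) →
      ¬ ∃ j, x ∈ edgeSide T (b j) (a j) ∧ y ∈ edgeSide T (b j) (a j) := by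
    rintro ⟨i, hi⟩ ⟨j, hx, hy⟩
    rcases Sym2.eq_iff.mp hi with ⟨rfl, rfl⟩ | ⟨rfl, rfl⟩
    · exact fst_notMem_edgeSide_swap hadj hA hT.isAcyclic i j hx
    · exact fst_notMem_edgeSide_swap hadj hA hT.isAcyclic i j hy
  have isEdge_not_inA : (∃ i, s(x, y) = s(a i, b i)) →
      ¬ ((x ∈ ⋂ i, edgeSide T (a i) (b i)) ∧ (y ∈ ⋂ i, edgeSide T (a i) (b i))) := by
    rintro ⟨i, hi⟩ ⟨hx, hy⟩
    rcases Sym2.eq_iff.mp hi with ⟨rfl, rfl⟩ | ⟨rfl, rfl⟩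
    · exact snd_notMem_edgeSide hT.isAcyclic (hadj i) (Set.mem_iInter.mp hy i)
    · exact snd_notMem_edgeSide hT.isAcyclic (hadj i) (Set.mem_iInter.mp hx i)
  have inB_not_inA : (∃ j, x ∈ edgeSide T (b j) (a j) ∧ y ∈ edgeSide T (b j) (a j)) →
      ¬ ((x ∈ ⋂ i, edgeSide T (a i) (b i)) ∧ (y ∈ ⋂ i, edgeSide T (a i) (b i))) := by
    rintro ⟨j, hx, -⟩ ⟨hxA, -⟩
    exact (disjoint_edgeSide hT.isAcyclic (hadj j)).notMem_of_mem_right hx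
      (Set.mem_iInter.mp hxA j)
  by_cases isEdge : ∃ i, s(x, y) = s(a i, b i)
  · exact Or.inl ⟨isEdge, isEdge_not_inB isEdge, isEdge_not_inA isEdge⟩
  by_cases inB : ∃ j, x ∈ edgeSide T (b j) (a j) ∧ y ∈ edgeSide T (b j) (a j)
  · obtain ⟨j, hj⟩ := inB
    refine Or.inr (Or.inl ⟨⟨j, hj, fun j' hj' => ?_⟩, isEdge, inB_not_inA ⟨j, hj⟩⟩)
    by_contra hne
    exact (disjoint_edgeSide_swap hadj hA hT.isAcyclic hne).notMem_of_mem_left hj'.1 hj.1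
  have inA : ∀ i, x ∈ edgeSide T (a i) (b i) ∧ y ∈ edgeSide T (a i) (b i) := fun i =>
    (mem_edgeSide_and_or_of_adj hT.connected hxy fun h => isEdge ⟨i, h⟩).resolve_right
      fun h => inB ⟨i, h⟩
  exact Or.inr (Or.inr ⟨⟨Set.mem_iInter.mpr fun i => (inA i).1,
    Set.mem_iInter.mpr fun i => (inA i).2⟩, isEdge, inB⟩)

end EdgeFamily

theorem statement_10_general {V : Type*} (T : SimpleGraph V) (hT : T.IsTree)
    (k : ℕ) (hk : 1 ≤ k) (a b : Fin k → V) (hadj : ∀ i, T.Adj (a i) (b i))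
    (hA : ∀ i j : Fin k, i ≠ j →
      a j ∈ edgeSide T (a i) (b i) ∧ b j ∈ edgeSide T (a i) (b i)) :
    (∃ v : V, ∀ i : Fin k, v ∈ edgeSide T (a i) (b i)) ∧
    (∀ i j : Fin k, i ≠ j →
      Disjoint (edgeSide T (b i) (a i)) (edgeSide T (b j) (a j))) ∧
    (∀ x y : V, T.Adj x y →
      ((∃ i : Fin k, s(x, y) = s(a i, b i)) ∧
        ¬ (∃ i : Fin k, x ∈ edgeSide T (b i) (a i) ∧ y ∈ edgeSide T (b i) (a i)) ∧
        ¬ ((x ∈ ⋂ i : Fin k, edgeSide T (a i) (b i)) ∧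
            (y ∈ ⋂ i : Fin k, edgeSide T (a i) (b i)))) ∨
      ((∃! i : Fin k, x ∈ edgeSide T (b i) (a i) ∧ y ∈ edgeSide T (b i) (a i)) ∧
        ¬ (∃ i : Fin k, s(x, y) = s(a i, b i)) ∧
        ¬ ((x ∈ ⋂ i : Fin k, edgeSide T (a i) (b i)) ∧
            (y ∈ ⋂ i : Fin k, edgeSide T (a i) (b i)))) ∨
      (((x ∈ ⋂ i : Fin k, edgeSide T (a i) (b i)) ∧
          (y ∈ ⋂ i : Fin k, edgeSide T (a i) (b i))) ∧
        ¬ (∃ i : Fin k, s(x, y) = s(a i, b i)) ∧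
        ¬ (∃ i : Fin k, x ∈ edgeSide T (b i) (a i) ∧ y ∈ edgeSide T (b i) (a i)))) :=
  ⟨⟨a ⟨0, hk⟩, Set.mem_iInter.mp (fst_mem_iInter_edgeSide hA _)⟩,
    fun _ _ hij => disjoint_edgeSide_swap hadj hA hT.isAcyclic hij,
    fun _ _ hxy => adj_trichotomy hadj hA hT hxy⟩

/-- Let `T` be a finite tree with pairwise distinct edges
`eᵢ = (a i)(b i)` for `i : Fin k`, `k ≥ 1`; write `Aᵢ = edgeSide T (a i) (b i)` and
`Bᵢ = edgeSide T (b i) (a i)` for the two components of `T − eᵢ`, and suppose that for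
`i ≠ j` both endpoints of `e j` lie in `Aᵢ`. Then (a) some vertex lies in every `Aᵢ`;
(b) the `Bᵢ` are pairwise disjoint; and (c) every edge of `T` is exactly one of: one of
the `eᵢ`, an edge of exactly one of the subtrees `Bᵢ`, or an edge with both endpoints in
`⋂ i, Aᵢ`. -/
theorem statement_10 {V : Type*} [Fintype V] (T : SimpleGraph V) (hT : T.IsTree)
    (k : ℕ) (hk : 1 ≤ k) (a b : Fin k → V) (hadj : ∀ i, T.Adj (a i) (b i))
    (hdist : ∀ i j : Fin k, i ≠ j → s(a i, b i) ≠ s(a j, b j))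
    (hA : ∀ i j : Fin k, i ≠ j →
      a j ∈ edgeSide T (a i) (b i) ∧ b j ∈ edgeSide T (a i) (b i)) :
    (∃ v : V, ∀ i : Fin k, v ∈ edgeSide T (a i) (b i)) ∧
    (∀ i j : Fin k, i ≠ j →
      Disjoint (edgeSide T (b i) (a i)) (edgeSide T (b j) (a j))) ∧
    (∀ x y : V, T.Adj x y →
      ((∃ i : Fin k, s(x, y) = s(a i, b i)) ∧
        ¬ (∃ i : Fin k, x ∈ edgeSide T (b i) (a i) ∧ y ∈ edgeSide T (b i) (a i)) ∧
        ¬ ((x ∈ ⋂ i : Fin k, edgeSide T (a i) (b i)) ∧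
            (y ∈ ⋂ i : Fin k, edgeSide T (a i) (b i)))) ∨
      ((∃! i : Fin k, x ∈ edgeSide T (b i) (a i) ∧ y ∈ edgeSide T (b i) (a i)) ∧
        ¬ (∃ i : Fin k, s(x, y) = s(a i, b i)) ∧
        ¬ ((x ∈ ⋂ i : Fin k, edgeSide T (a i) (b i)) ∧
            (y ∈ ⋂ i : Fin k, edgeSide T (a i) (b i)))) ∨
      (((x ∈ ⋂ i : Fin k, edgeSide T (a i) (b i)) ∧
          (y ∈ ⋂ i : Fin k, edgeSide T (a i) (b i))) ∧
        ¬ (∃ i : Fin k, s(x, y) = s(a i, b i)) ∧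
        ¬ (∃ i : Fin k, x ∈ edgeSide T (b i) (a i) ∧ y ∈ edgeSide T (b i) (a i)))) :=
  statement_10_general T hT k hk a b hadj hA
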